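/- Let H be a Hilbert space, A ⊆ B(H) a C*-subalgebra. Suppose f ∈ C_u([0,∞), B(H)) satisfies [f(t), a] ∈ K(H) for all t and all a ∈ A, with ‖[f(·), a]‖ vanishing at infinity for each a ∈ A. Define F : [0,∞) → B(H^∞) on H^∞ = ⊕_{n=0}^∞ H by F(t) = (f(t), f(t+1), f(t+2), ...) acting diagonally. Then F is bounded and uniformly continuous, and for every a ∈ A, the function t ↦ [F(t), a^∞] takes values in K(H^∞) and vanishes in norm at infinity, where a^∞ = ⊕_n a. -/

import Mathlib

/-!
Every operator in the statement is diagonal on `ℓ²(ℕ, H)`: `F t` has blocks `f (t + n)`,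
`F s - F t` has blocks `f (s + n) - f (t + n)`, and `[F t, a^∞]` has blocks `[f (t + n), a]`.
The norm of a diagonal operator is at most the supremum of the norms of its blocks, which gives
boundedness, uniform continuity and decay at infinity. A diagonal operator whose blocks are compact
and tend to zero in norm is the norm limit of its finite truncations, which are compact.
-/

open scoped NNReal ENNReal Topology
open Filter

noncomputable section

namespace lp

variable {𝕜 ι : Type*} {E : ι → Type*} [NontriviallyNormedField 𝕜]
  [∀ i, NormedAddCommGroup (E i)] [∀ i, NormedSpace 𝕜 (E i)] {p : ℝ≥0∞} [Fact (1 ≤ p)]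

def IsDiagonal (T : lp E p →L[𝕜] lp E p) (b : ∀ i, E i →L[𝕜] E i) : Prop :=
  ∀ x i, T x i = b i (x i)

theorem isDiagonal_sum_single_comp_eval [DecidableEq ι] (b : ∀ i, E i →L[𝕜] E i) (s : Finset ι) :
    IsDiagonal (∑ i ∈ s, singleContinuousLinearMap 𝕜 E p i ∘L b i ∘L evalCLM 𝕜 E p i)
      (fun i => if i ∈ s then b i else 0) := fun x j => by
  simp only [FunLike.coe_sum, lp.coeFn_sum, Finset.sum_apply,
    ContinuousLinearMap.comp_apply, singleContinuousLinearMap_apply, lp.single_apply,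
    Finset.sum_pi_single]
  split_ifs <;> rfl

namespace IsDiagonal

variable {T U : lp E p →L[𝕜] lp E p} {b c : ∀ i, E i →L[𝕜] E i}

theorem sub (hT : IsDiagonal T b) (hU : IsDiagonal U c) :
    IsDiagonal (T - U) (fun i => b i - c i) := fun x i => by
  simp [hT x i, hU x i]

theorem mul (hT : IsDiagonal T b) (hU : IsDiagonal U c) :
    IsDiagonal (T * U) (fun i => b i * c i) := fun x i => by
  simp [hT _ i, hU x i]

theorem opNorm_le (hT : IsDiagonal T b) (hp : p ≠ ∞) {C : ℝ} (hC : 0 ≤ C)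
    (hb : ∀ i, ‖b i‖ ≤ C) : ‖T‖ ≤ C := by
  have hp₀ : 0 < p.toReal := ENNReal.toReal_pos (zero_lt_one.trans_le Fact.out).ne' hp
  refine T.opNorm_le_bound hC fun x => ?_
  have hTx : ‖T x‖ ^ p.toReal ≤ (C * ‖x‖) ^ p.toReal := by
    rw [Real.mul_rpow hC (norm_nonneg _)]
    refine hasSum_le (fun i => ?_) (lp.hasSum_norm hp₀ (T x))
      ((lp.hasSum_norm hp₀ x).mul_left _)
    rw [hT x i, ← Real.mul_rpow hC (norm_nonneg _)]
    gcongr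
    exact (b i).le_of_opNorm_le (hb i) _
  exact (Real.rpow_le_rpow_iff (norm_nonneg _) (by positivity) hp₀).mp hTx

theorem isCompactOperator [∀ i, CompleteSpace (E i)] (hT : IsDiagonal T b) (hp : p ≠ ∞)
    (hb : ∀ i, IsCompactOperator (b i)) (hb₀ : Tendsto (fun i => ‖b i‖) cofinite (𝓝 0)) :
    IsCompactOperator T := by
  classical
  set S : Finset ι → (lp E p →L[𝕜] lp E p) :=
    fun s => ∑ i ∈ s, singleContinuousLinearMap 𝕜 E p i ∘L b i ∘L evalCLM 𝕜 E p i
  have hS : ∀ s, IsCompactOperator (S s) := fun s =>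
    Submodule.sum_mem (compactOperator _ _ _) fun i _ =>
      ((hb i).comp_clm (evalCLM 𝕜 E p i)).clm_comp (singleContinuousLinearMap 𝕜 E p i)
  refine isCompactOperator_of_tendsto (l := atTop) ?_ (Eventually.of_forall hS)
  rw [Metric.tendsto_atTop]
  intro ε hε
  have hfin : {i | ¬ ‖b i‖ < ε / 2}.Finite :=
    eventually_cofinite.mp (hb₀.eventually (gt_mem_nhds (half_pos hε)))
  refine ⟨hfin.toFinset, fun s hs => ?_⟩
  have hTS : ‖T - S s‖ ≤ ε / 2 := by
    refine (hT.sub (isDiagonal_sum_single_comp_eval b s)).opNorm_le hp (half_pos hε).le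
      fun i => ?_
    by_cases hi : i ∈ s
    · simpa [hi] using (half_pos hε).le
    · have : ‖b i‖ < ε / 2 := not_not.mp fun h => hi (hs (hfin.mem_toFinset.mpr h))
      simpa [hi] using this.le
  rw [dist_comm, dist_eq_norm]
  linarith

end IsDiagonal

end lp

section Shift

variable {𝕜 E : Type*} [NontriviallyNormedField 𝕜] [NormedAddCommGroup E] [NormedSpace 𝕜 E]
  {p : ℝ≥0∞} [Fact (1 ≤ p)]

theorem uniformContinuous_of_isDiagonal_shift (hp : p ≠ ∞) {f : ℝ≥0 → E →L[𝕜] E}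
    {F : ℝ≥0 → lp (fun _ : ℕ => E) p →L[𝕜] lp (fun _ : ℕ => E) p}
    (hF : ∀ t, lp.IsDiagonal (F t) fun n => f (t + n)) (hf : UniformContinuous f) :
    UniformContinuous F := by
  rw [Metric.uniformContinuous_iff] at hf ⊢
  intro ε hε
  obtain ⟨δ, hδ, hfδ⟩ := hf (ε / 2) (half_pos hε)
  refine ⟨δ, hδ, fun {s t} hst => ?_⟩
  have hshift (n : ℕ) : dist (s + n) (t + n) < δ := by simpa [NNReal.dist_eq] using hst
  have hFst : ‖F s - F t‖ ≤ ε / 2 :=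
    ((hF s).sub (hF t)).opNorm_le hp (half_pos hε).le fun n =>
      (dist_eq_norm (f (s + n)) _ ▸ hfδ (hshift n)).le
  rw [dist_eq_norm]
  linarith

theorem tendsto_norm_of_isDiagonal_shift (hp : p ≠ ∞) {g : ℝ≥0 → E →L[𝕜] E}
    {G : ℝ≥0 → lp (fun _ : ℕ => E) p →L[𝕜] lp (fun _ : ℕ => E) p}
    (hG : ∀ t, lp.IsDiagonal (G t) fun n => g (t + n))
    (hg : Tendsto (fun t => ‖g t‖) atTop (𝓝 0)) :
    Tendsto (fun t => ‖G t‖) atTop (𝓝 0) := by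
  rw [Metric.tendsto_atTop] at hg ⊢
  intro ε hε
  obtain ⟨t₀, ht₀⟩ := hg (ε / 2) (half_pos hε)
  refine ⟨t₀, fun t ht => ?_⟩
  have hGt : ‖G t‖ ≤ ε / 2 := (hG t).opNorm_le hp (half_pos hε).le fun n => by
    simpa using (ht₀ (t + n) (ht.trans le_self_add)).le
  rw [Real.dist_eq, sub_zero, abs_of_nonneg (norm_nonneg _)]
  linarith

end Shift

variable {H : Type*} [NormedAddCommGroup H] [InnerProductSpace ℂ H] [CompleteSpace H]

local notation "Hinf" => lp (fun _ : ℕ => H) 2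

/-- Let `A ⊆ B(H)` be a C*-subalgebra, and let
`f ∈ C_u([0,∞), B(H))` satisfy `[f(t), a] ∈ K(H)` for all `t`, with
`‖[f(t), a]‖ → 0` as `t → ∞`, for each `a ∈ A`.  Let
`F(t) = (f(t), f(t+1), f(t+2), ...)` act diagonally on `H^∞ = ⊕ₙ H`.  Then `F` is
bounded and uniformly continuous, and for every `a ∈ A`, the function
`t ↦ [F(t), a^∞]` takes values in `K(H^∞)` and vanishes in norm at infinity, where
`a^∞ = ⊕ₙ a` is the diagonal operator. -/
theorem stmt14
    (A : StarSubalgebra ℂ (H →L[ℂ] H))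
    (f : ℝ≥0 → (H →L[ℂ] H))
    (hf_u : UniformContinuous f) (hf_bdd : ∃ C, ∀ t, ‖f t‖ ≤ C)
    (hf_cpt : ∀ a ∈ A, ∀ t, IsCompactOperator ⇑(f t * a - a * f t))
    (hf_van : ∀ a ∈ A, Tendsto (fun t => ‖f t * a - a * f t‖) atTop (nhds 0))
    (F : ℝ≥0 → (Hinf →L[ℂ] Hinf))
    (hF : ∀ (t : ℝ≥0) (h : Hinf) (n : ℕ),
      (F t h : ∀ _ : ℕ, H) n = f (t + (n : ℝ≥0)) (h n)) :
    (∃ C, ∀ t, ‖F t‖ ≤ C) ∧ UniformContinuous F ∧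
    ∀ a ∈ A, ∀ ainf : Hinf →L[ℂ] Hinf,
      (∀ (h : Hinf) (n : ℕ), (ainf h : ∀ _ : ℕ, H) n = a (h n)) →
      (∀ t, IsCompactOperator ⇑(F t * ainf - ainf * F t)) ∧
      Tendsto (fun t => ‖F t * ainf - ainf * F t‖) atTop (nhds 0) := by
  obtain ⟨C, hC⟩ := hf_bdd
  have hp : (2 : ℝ≥0∞) ≠ ∞ := ENNReal.ofNat_ne_top
  have hFdiag (t : ℝ≥0) : lp.IsDiagonal (F t) fun n => f (t + n) := hF t
  refine ⟨⟨C, fun t => (hFdiag t).opNorm_le hp ((norm_nonneg _).trans (hC 0)) fun n => hC _⟩,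
    uniformContinuous_of_isDiagonal_shift hp hFdiag hf_u, fun a ha ainf hainf => ?_⟩
  have hadiag : lp.IsDiagonal ainf fun _ => a := hainf
  have hcomm (t : ℝ≥0) :
      lp.IsDiagonal (F t * ainf - ainf * F t) fun n => f (t + n) * a - a * f (t + n) :=
    ((hFdiag t).mul hadiag).sub (hadiag.mul (hFdiag t))
  refine ⟨fun t => (hcomm t).isCompactOperator hp (fun n => hf_cpt a ha _) ?_,
    tendsto_norm_of_isDiagonal_shift hp hcomm (hf_van a ha)⟩
  rw [Nat.cofinite_eq_atTop]
  exact (hf_van a ha).comp (tendsto_atTop_mono (fun n => le_add_self) tendsto_natCast_atTop_atTop)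

end
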